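/- No C₃*-critical signed graph contains a vertex of degree 1, nor a vertex of degree 2 adjacent to another vertex of degree 2. -/

import Mathlib

/-- A signed graph: a vertex type with a symmetric positive-edge relation and a
symmetric negative-edge relation (loops and "digons" are allowed). -/
structure SignedGraph (V : Type*) where
  pos : V → V → Prop
  neg : V → V → Prop
  pos_symm : Symmetric pos
  neg_symm : Symmetric neg

namespace SignedGraph

variable {V W : Type*}

/-- Switching at the vertex set `{v | s v = true}`: signs of edges with exactly one
endpoint in the set are flipped; loops and edges with both or no endpoints in the
set are unchanged. -/
def switch (G : SignedGraph V) (s : V → Bool) : SignedGraph V where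
  pos u v := if s u = s v then G.pos u v else G.neg u v
  neg u v := if s u = s v then G.neg u v else G.pos u v
  pos_symm := by
    intro u v h
    by_cases hs : s u = s v
    · rw [if_pos hs] at h; rw [if_pos hs.symm]; exact G.pos_symm h
    · rw [if_neg hs] at h; rw [if_neg (fun e => hs e.symm)]; exact G.neg_symm h
  neg_symm := by
    intro u v h
    by_cases hs : s u = s v
    · rw [if_pos hs] at h; rw [if_pos hs.symm]; exact G.neg_symm h
    · rw [if_neg hs] at h; rw [if_neg (fun e => hs e.symm)]; exact G.pos_symm h

/-- An edge-sign preserving homomorphism maps positive edges to positive edges and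
negative edges to negative edges. -/
def IsESPHom (G : SignedGraph V) (H : SignedGraph W) (φ : V → W) : Prop :=
  (∀ u v, G.pos u v → H.pos (φ u) (φ v)) ∧ (∀ u v, G.neg u v → H.neg (φ u) (φ v))

/-- A signed graph admits a homomorphism to another iff some switching of it admits
an edge-sign preserving homomorphism (this preserves adjacency and signs of closed
walks). -/
def HasHomTo (G : SignedGraph V) (H : SignedGraph W) : Prop :=
  ∃ (s : V → Bool) (φ : V → W), IsESPHom (G.switch s) H φ

/-- `H` is a subgraph of `G` (on the same vertex set). -/
def IsSubgraph (H G : SignedGraph V) : Prop :=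
  (∀ u v, H.pos u v → G.pos u v) ∧ (∀ u v, H.neg u v → G.neg u v)

/-- The number of edges of a finite signed graph (unordered pairs, each sign
counted separately). -/
noncomputable def edgeCount (G : SignedGraph V) : ℕ :=
  (Sym2.fromRel (⟨fun _ _ h => G.pos_symm h⟩ : Std.Symm G.pos)).ncard +
    (Sym2.fromRel (⟨fun _ _ h => G.neg_symm h⟩ : Std.Symm G.neg)).ncard

/-- The degree of a vertex: the number of its neighbours (via an edge of either sign). -/
noncomputable def degree (G : SignedGraph V) (v : V) : ℕ :=
  {u | G.pos v u ∨ G.neg v u}.ncard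

/-- The underlying simple graph of a signed graph (loops discarded). -/
def underlying (G : SignedGraph V) : SimpleGraph V :=
  SimpleGraph.fromRel (fun u v => G.pos u v ∨ G.neg u v)

end SignedGraph

/-- `C₃*`: the all-positive triangle with a negative loop at each vertex. -/
def C3star : SignedGraph (Fin 3) where
  pos u v := u ≠ v
  neg u v := u = v
  pos_symm := fun _ _ h => h.symm
  neg_symm := fun _ _ h => h.symm

/-- A signed graph is `C₃*`-critical: it has no digon and no positive loop (the
girth conditions of Definition 2.7), admits no homomorphism to `C₃*`, but every
proper subgraph does. -/
def IsC3Critical {V : Type*} (G : SignedGraph V) : Prop :=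
  (∀ u v, ¬ (G.pos u v ∧ G.neg u v)) ∧
  (∀ v, ¬ G.pos v v) ∧
  ¬ G.HasHomTo C3star ∧
  ∀ H : SignedGraph V, H.IsSubgraph G → H ≠ G → H.HasHomTo C3star

/-!
Deleting an edge `uv` of a `C₃*`-critical graph leaves a graph that maps to `C₃*`. A homomorphism
to `C₃*` together with its switching is an edge-sign preserving map into the switching cover of
`C₃*`, a six-vertex signed graph with a negative loop at every vertex in which every vertex has
neighbours of both signs and any two vertices are joined by walks of length three with any
prescribed signs. So the images of a pendant vertex, or of two adjacent vertices of degree two,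
can be reassigned so that the deleted edge is respected as well, contradicting criticality.
-/

theorem Set.exists_eq_pair_of_ncard_eq_two {α : Type*} {s : Set α} {a : α} (hs : s.ncard = 2)
    (ha : a ∈ s) : ∃ b, s = {a, b} := by
  obtain ⟨x, y, -, rfl⟩ := Set.ncard_eq_two.mp hs
  rcases ha with rfl | rfl
  · exact ⟨y, rfl⟩
  · exact ⟨x, Set.pair_comm x a⟩

namespace SignedGraph

variable {V W : Type*}

def Adj (G : SignedGraph V) : Bool → V → V → Prop
  | true => G.pos
  | false => G.neg

theorem Adj.symm {G : SignedGraph V} {e : Bool} {a b : V} (h : G.Adj e a b) : G.Adj e b a := by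
  cases e
  · exact G.neg_symm h
  · exact G.pos_symm h

theorem Adj.sign_eq {G : SignedGraph V} {a b : V} (hdig : ¬ (G.pos a b ∧ G.neg a b))
    {e e' : Bool} (h : G.Adj e a b) (h' : G.Adj e' a b) : e = e' := by
  cases e <;> cases e'
  exacts [rfl, (hdig ⟨h', h⟩).elim, (hdig ⟨h, h'⟩).elim, rfl]

theorem isESPHom_iff {G : SignedGraph V} {H : SignedGraph W} {f : V → W} :
    G.IsESPHom H f ↔ ∀ e a b, G.Adj e a b → H.Adj e (f a) (f b) := by
  simp only [IsESPHom, Bool.forall_bool, Adj]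
  exact And.comm

def neighborSet (G : SignedGraph V) (v : V) : Set V :=
  {u | G.pos v u ∨ G.neg v u}

theorem degree_eq_ncard_neighborSet (G : SignedGraph V) (v : V) :
    G.degree v = (G.neighborSet v).ncard :=
  rfl

theorem mem_neighborSet {G : SignedGraph V} {u v : V} :
    u ∈ G.neighborSet v ↔ ∃ e, G.Adj e v u := by
  simp only [neighborSet, Set.mem_ofPred_eq, Bool.exists_bool, Adj]
  exact Or.comm

def deleteEdge (G : SignedGraph V) (u v : V) : SignedGraph V where
  pos a b := G.pos a b ∧ s(a, b) ≠ s(u, v)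
  neg a b := G.neg a b ∧ s(a, b) ≠ s(u, v)
  pos_symm _ _ h := ⟨G.pos_symm h.1, Sym2.eq_swap ▸ h.2⟩
  neg_symm _ _ h := ⟨G.neg_symm h.1, Sym2.eq_swap ▸ h.2⟩

theorem adj_deleteEdge {G : SignedGraph V} {u v a b : V} {e : Bool} :
    (G.deleteEdge u v).Adj e a b ↔ G.Adj e a b ∧ s(a, b) ≠ s(u, v) := by
  cases e <;> rfl

theorem deleteEdge_isSubgraph (G : SignedGraph V) (u v : V) : (G.deleteEdge u v).IsSubgraph G :=
  ⟨fun _ _ h => h.1, fun _ _ h => h.1⟩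

theorem deleteEdge_ne {G : SignedGraph V} {u v : V} (h : v ∈ G.neighborSet u) :
    G.deleteEdge u v ≠ G := by
  intro hG
  obtain ⟨e, he⟩ := mem_neighborSet.mp h
  rw [← hG, adj_deleteEdge] at he
  exact he.2 rfl

/-- The first coordinate of a vertex of the cover records the side of a switching: an edge
between different sides changes its sign. -/
def switchCover (H : SignedGraph W) : SignedGraph (Bool × W) where
  pos p q := if p.1 = q.1 then H.pos p.2 q.2 else H.neg p.2 q.2
  neg p q := if p.1 = q.1 then H.neg p.2 q.2 else H.pos p.2 q.2
  pos_symm p q h := by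
    dsimp only at h ⊢
    simp only [eq_comm (a := q.1)]
    split_ifs at h ⊢
    exacts [H.pos_symm h, H.neg_symm h]
  neg_symm p q h := by
    dsimp only at h ⊢
    simp only [eq_comm (a := q.1)]
    split_ifs at h ⊢
    exacts [H.neg_symm h, H.pos_symm h]

theorem hasHomTo_iff_exists_isESPHom_switchCover {G : SignedGraph V} {H : SignedGraph W} :
    G.HasHomTo H ↔ ∃ f : V → Bool × W, G.IsESPHom H.switchCover f := by
  have key : ∀ (s : V → Bool) (φ : V → W),
      (G.switch s).IsESPHom H φ ↔ G.IsESPHom H.switchCover (fun x => (s x, φ x)) := by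
    intro s φ
    simp only [IsESPHom, switch, switchCover, ← forall_and]
    refine forall_congr' fun a => forall_congr' fun b => ?_
    split_ifs <;> tauto
  constructor
  · rintro ⟨s, φ, h⟩
    exact ⟨_, (key s φ).mp h⟩
  · rintro ⟨f, h⟩
    exact ⟨_, _, (key (Prod.fst ∘ f) (Prod.snd ∘ f)).mpr h⟩

end SignedGraph

namespace C3star

open SignedGraph

theorem switchCover_adj_false_self (p : Bool × Fin 3) : C3star.switchCover.Adj false p p := by
  simp [Adj, switchCover, C3star]

theorem exists_switchCover_adj (e : Bool) (q : Bool × Fin 3) :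
    ∃ p, C3star.switchCover.Adj e p q := by
  revert e q
  simp only [Adj, switchCover, C3star, Bool.forall_bool]
  decide

theorem exists_switchCover_path (e₁ e₂ e₃ : Bool) (x y : Bool × Fin 3) :
    ∃ p q, C3star.switchCover.Adj e₁ x p ∧ C3star.switchCover.Adj e₂ p q ∧
      C3star.switchCover.Adj e₃ q y := by
  revert x y
  cases e₁ <;> cases e₂ <;> cases e₃ <;> simp only [Adj, switchCover, C3star] <;> decide

end C3star

namespace SignedGraph

variable {V W : Type*}

theorem adj_deleteEdge_of_ne {G : SignedGraph V} {u v a b x : V} {e : Bool} (h : G.Adj e a b)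
    (hx : x ∈ s(u, v)) (ha : a ≠ x) (hb : b ≠ x) : (G.deleteEdge u v).Adj e a b := by
  refine adj_deleteEdge.mpr ⟨h, fun hab => ?_⟩
  rw [← hab, Sym2.mem_iff] at hx
  rcases hx with rfl | rfl
  exacts [ha rfl, hb rfl]

theorem isESPHom_update [DecidableEq V] {G G' : SignedGraph V} {H : SignedGraph W} {f : V → W}
    {x : V} {w : W} (hloop : ¬ G.pos x x) (hw : H.neg w w) (hf : G'.IsESPHom H f)
    (hGG' : ∀ e a b, a ≠ x → b ≠ x → G.Adj e a b → G'.Adj e a b)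
    (hx : ∀ e y, y ≠ x → G.Adj e x y → H.Adj e w (f y)) :
    G.IsESPHom H (Function.update f x w) := by
  rw [isESPHom_iff] at hf ⊢
  have hxy : ∀ e y, G.Adj e x y → H.Adj e w (Function.update f x w y) := by
    intro e y h
    rcases eq_or_ne y x with rfl | hy
    · cases e
      · simpa using (show H.Adj false w w from hw)
      · exact absurd h hloop
    · simpa [hy] using hx e y hy h
  intro e a b h
  by_cases ha : a = x
  · subst ha
    simpa using hxy e b h
  by_cases hb : b = x
  · subst hb
    simpa using (hxy e a h.symm).symm
  · simpa [ha, hb] using hf e a b (hGG' e a b ha hb h)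

theorem hasHomTo_C3star_of_neighborSet_eq_singleton {G : SignedGraph V} {v w : V}
    (hdig : ∀ a b, ¬ (G.pos a b ∧ G.neg a b)) (hloop : ∀ a, ¬ G.pos a a)
    (hv : G.neighborSet v = {w}) (h : (G.deleteEdge v w).HasHomTo C3star) :
    G.HasHomTo C3star := by
  classical
  rw [hasHomTo_iff_exists_isESPHom_switchCover] at h ⊢
  obtain ⟨f, hf⟩ := h
  obtain ⟨e₀, he₀⟩ := mem_neighborSet.mp (hv ▸ rfl : w ∈ G.neighborSet v)
  obtain ⟨p, hp⟩ := C3star.exists_switchCover_adj e₀ (f w)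
  refine ⟨Function.update f v p,
    isESPHom_update (hloop v) (C3star.switchCover_adj_false_self p) hf
      (fun _ c d hc hd h => adj_deleteEdge_of_ne h (Sym2.mem_mk_left v w) hc hd) ?_⟩
  intro e y _ hy
  obtain rfl : y = w := by simpa [hv] using mem_neighborSet.mpr ⟨e, hy⟩
  rwa [hy.sign_eq (hdig v y) he₀]

theorem hasHomTo_C3star_of_neighborSet_eq_pair {G : SignedGraph V} {u v a b : V}
    (hdig : ∀ a b, ¬ (G.pos a b ∧ G.neg a b)) (hloop : ∀ a, ¬ G.pos a a)
    (hu : G.neighborSet u = {v, a}) (hv : G.neighborSet v = {u, b})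
    (h : (G.deleteEdge u v).HasHomTo C3star) : G.HasHomTo C3star := by
  classical
  rw [hasHomTo_iff_exists_isESPHom_switchCover] at h ⊢
  obtain ⟨f, hf⟩ := h
  obtain ⟨eUV, hUV⟩ := mem_neighborSet.mp (hu ▸ Set.mem_insert v {a} : v ∈ G.neighborSet u)
  obtain ⟨eA, hA⟩ := mem_neighborSet.mp (hu ▸ Set.mem_insert_of_mem v rfl : a ∈ G.neighborSet u)
  obtain ⟨eB, hB⟩ := mem_neighborSet.mp (hv ▸ Set.mem_insert_of_mem u rfl : b ∈ G.neighborSet v)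
  obtain ⟨p, q, hap, hpq, hqb⟩ := C3star.exists_switchCover_path eA eUV eB (f a) (f b)
  have hg : (G.deleteEdge u v).IsESPHom C3star.switchCover (Function.update f u p) := by
    refine isESPHom_update (fun h => hloop u h.1) (C3star.switchCover_adj_false_self p) hf
      (fun _ _ _ _ _ h => h) fun e y _ hy => ?_
    obtain ⟨hy, huy⟩ := adj_deleteEdge.mp hy
    have hyv : y ≠ v := by
      rintro rfl
      exact huy rfl
    obtain rfl : y = a := by simpa [hu, hyv] using mem_neighborSet.mpr ⟨e, hy⟩
    rw [hy.sign_eq (hdig u y) hA]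
    exact hap.symm
  refine ⟨Function.update (Function.update f u p) v q,
    isESPHom_update (hloop v) (C3star.switchCover_adj_false_self q) hg
      (fun _ c d hc hd h => adj_deleteEdge_of_ne h (Sym2.mem_mk_right u v) hc hd)
      fun e y hyv hy => ?_⟩
  rcases eq_or_ne y u with rfl | hyu
  · rw [hy.symm.sign_eq (hdig y v) hUV]
    simpa using hpq.symm
  · obtain rfl : y = b := by simpa [hv, hyu] using mem_neighborSet.mpr ⟨e, hy⟩
    rw [hy.sign_eq (hdig v y) hB]
    simpa [hyu] using hqb

end SignedGraph

theorem c3critical_no_deg_one_no_adjacent_deg_two_general {V : Type*}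
    (G : SignedGraph V) (hcrit : IsC3Critical G) :
    (∀ v, G.degree v ≠ 1) ∧
    (∀ u v, u ≠ v → (G.pos u v ∨ G.neg u v) →
      ¬ (G.degree u = 2 ∧ G.degree v = 2)) := by
  obtain ⟨hdig, hloop, hnot, hsub⟩ := hcrit
  have hdel : ∀ {u v}, v ∈ G.neighborSet u → (G.deleteEdge u v).HasHomTo C3star :=
    fun h => hsub _ (G.deleteEdge_isSubgraph _ _) (SignedGraph.deleteEdge_ne h)
  refine ⟨fun v hv => ?_, fun u v _ huv ⟨hu, hv⟩ => ?_⟩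
  · rw [G.degree_eq_ncard_neighborSet] at hv
    obtain ⟨w, hw⟩ := Set.ncard_eq_one.mp hv
    exact hnot (G.hasHomTo_C3star_of_neighborSet_eq_singleton hdig hloop hw
      (hdel (hw ▸ Set.mem_singleton w)))
  · rw [G.degree_eq_ncard_neighborSet] at hu hv
    obtain ⟨a, ha⟩ := Set.exists_eq_pair_of_ncard_eq_two hu huv
    obtain ⟨b, hb⟩ :=
      Set.exists_eq_pair_of_ncard_eq_two hv (huv.imp (G.pos_symm ·) (G.neg_symm ·))
    exact hnot (G.hasHomTo_C3star_of_neighborSet_eq_pair hdig hloop ha hb (hdel huv))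

/-- No `C₃*`-critical signed graph contains a vertex of degree `1`, nor two
adjacent vertices of degree `2`. -/
theorem c3critical_no_deg_one_no_adjacent_deg_two {V : Type*} [Fintype V]
    (G : SignedGraph V) (hcrit : IsC3Critical G) :
    (∀ v, G.degree v ≠ 1) ∧
    (∀ u v, u ≠ v → (G.pos u v ∨ G.neg u v) →
      ¬ (G.degree u = 2 ∧ G.degree v = 2)) :=
  c3critical_no_deg_one_no_adjacent_deg_two_general G hcrit
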